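/- arXiv:2101.03519 — 2 statements merged into one kernel-verified Lean document; each statement's English description precedes it below -/
import Mathlib

section
/- Let S and T be two distinct vertices of G that are not separated by a bridge (for every bridge e of G, the vertices S and T lie in the same connected component of G with e deleted). Then any path from S to T that contains the minimum possible number of edges is a non-separating path. -/
/-!
A path `P` from `S` to `T` with the fewest edges is a shortest walk, hence has no chords. None of
its edges `uv` is a bridge: the parts of `P` before and after `uv` avoid `uv`, so together with an
`S`–`T` connection avoiding `uv` they would join `u` to `v`. In a chordal graph every non-bridge
edge `uv` lies in a triangle `uxv`: a shortest `u`–`v` path `Q` avoiding `uv` closes a cycle with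
`uv`, and if `Q` had more than two edges, a chord of that cycle would be a chord of `Q`. As `P` has
no chords, the apex `x` is not on `P`, so `u` and `v` stay joined once the edges of `P` are
deleted, and hence so does every pair of adjacent vertices of `G`.
-/

open SimpleGraph

namespace NSP

variable {V : Type*}

/-- A chordal graph: every cycle with at least four vertices has a chord,
i.e. an edge not on the cycle joining two vertices of the cycle. -/
def Chordal (G : SimpleGraph V) : Prop :=
  ∀ ⦃v : V⦄ (c : G.Walk v v), c.IsCycle → 4 ≤ c.length →
    ∃ u w : V, u ∈ c.support ∧ w ∈ c.support ∧ G.Adj u w ∧ s(u, w) ∉ c.edges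

/-- A path in `G`, given as a nonempty list of vertices with consecutive
vertices adjacent. -/
def IsPathSeq (G : SimpleGraph V) (p : List V) : Prop :=
  p ≠ [] ∧ p.Chain' G.Adj

/-- A simple path: a path all of whose vertices are distinct. -/
def IsSimpleSeq (G : SimpleGraph V) (p : List V) : Prop :=
  IsPathSeq G p ∧ p.Nodup

/-- The set of edges of a path sequence. -/
def edgesOf (p : List V) : Set (Sym2 V) :=
  {e | ∃ (i : ℕ) (h : i + 1 < p.length),
    e = s(p.get ⟨i, by omega⟩, p.get ⟨i + 1, h⟩)}

/-- A set of edges is separating if deleting it from `G` leaves a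
disconnected graph. -/
def Separating (G : SimpleGraph V) (D : Set (Sym2 V)) : Prop :=
  ¬ (G.deleteEdges D).Connected

/-- A path is separating if its edge set is separating. -/
def SeparatingPath (G : SimpleGraph V) (p : List V) : Prop :=
  Separating G (edgesOf p)

/-- The contiguous subpath `p_{i,j} = p_i → ⋯ → p_j`. -/
def subseq (p : List V) (i j : ℕ) : List V :=
  (p.take (j + 1)).drop i

/-- `q` is a contiguous subpath of `p`. -/
def ContigSub (q p : List V) : Prop :=
  ∃ i j : ℕ, i ≤ j ∧ j < p.length ∧ q = subseq p i j

/-- A separator path: a simple separating path that does not properly contain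
(as a contiguous subpath) a separating path. -/
def SeparatorPath (G : SimpleGraph V) (p : List V) : Prop :=
  IsSimpleSeq G p ∧ SeparatingPath G p ∧
    ∀ q : List V, ContigSub q p → q ≠ p → ¬ SeparatingPath G q

/-- `u` and `v` are weakly `p`-connected: some path between `u` and `v`
shares no edge with `p`. -/
def WeaklyConn (G : SimpleGraph V) (p : List V) (u v : V) : Prop :=
  ∃ q : List V, IsPathSeq G q ∧ q.head? = some u ∧ q.getLast? = some v ∧
    edgesOf q ∩ edgesOf p = ∅

/-- `u` and `v` are strongly `p`-connected: some path between `u` and `v`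
shares no edge with `p` and, except at its endpoints, no vertex with `p`. -/
def StronglyConn (G : SimpleGraph V) (p : List V) (u v : V) : Prop :=
  ∃ q : List V, IsPathSeq G q ∧ q.head? = some u ∧ q.getLast? = some v ∧
    edgesOf q ∩ edgesOf p = ∅ ∧
    ∀ (i : ℕ) (h : i < q.length), 0 < i → i + 1 < q.length → q.get ⟨i, h⟩ ∉ p

/-- A path `r` is traversable if some simple path from `S` to `T` contains
`r` as a contiguous subpath. -/
def Traversable (G : SimpleGraph V) (S T : V) (r : List V) : Prop :=
  ∃ p : List V, IsSimpleSeq G p ∧ p.head? = some S ∧ p.getLast? = some T ∧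
    ContigSub r p

/-- A bad vertex: the middle vertex of a traversable separator path with
exactly two edges. -/
def BadVertex (G : SimpleGraph V) (S T : V) (v : V) : Prop :=
  ∃ r : List V, SeparatorPath G r ∧ Traversable G S T r ∧ r.length = 3 ∧
    r[1]? = some v

/-- A separator path is useful if each two-edge segment is shorter than the
corresponding chord. -/
def Useful (w : Sym2 V → ℝ) (r : List V) : Prop :=
  ∀ (i : ℕ) (h : i + 2 < r.length),
    w s(r.get ⟨i, by omega⟩, r.get ⟨i + 1, by omega⟩) +
      w s(r.get ⟨i + 1, by omega⟩, r.get ⟨i + 2, h⟩) <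
      w s(r.get ⟨i, by omega⟩, r.get ⟨i + 2, h⟩)

/-- A normal separator path: traversable, useful, and with more than two
edges (i.e. at least four vertices). -/
def NormalSep (G : SimpleGraph V) (w : Sym2 V → ℝ) (S T : V) (r : List V) : Prop :=
  SeparatorPath G r ∧ Traversable G S T r ∧ Useful w r ∧ 3 < r.length

/-- `v` is an inner vertex of `r` (a vertex of `r` other than its endpoints). -/
def InnerMem (r : List V) (v : V) : Prop :=
  ∃ (i : ℕ) (h : i < r.length), 0 < i ∧ i + 1 < r.length ∧ r.get ⟨i, h⟩ = v

/-- The total length of a path with respect to edge lengths `w`. -/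
def pathLength (w : Sym2 V → ℝ) (p : List V) : ℝ :=
  ((p.zip p.tail).map fun q => w s(q.1, q.2)).sum

/-- All edges of `G` have positive length. -/
def EdgePos (G : SimpleGraph V) (w : Sym2 V → ℝ) : Prop :=
  ∀ e ∈ G.edgeSet, 0 < w e

/-- The subgraph of `G` formed by the edges of `D` together with their
endpoints. -/
def edgeSubgraph (G : SimpleGraph V) (D : Set (Sym2 V)) : G.Subgraph where
  verts := {v | ∃ e ∈ D ∩ G.edgeSet, v ∈ e}
  Adj u v := s(u, v) ∈ D ∧ G.Adj u v
  adj_sub h := h.2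
  edge_vert {v w} h := ⟨s(v, w), ⟨h.1, h.2⟩, Sym2.mem_mk_left v w⟩
  symm := ⟨fun u v h => by
    obtain ⟨h1, h2⟩ := h
    exact ⟨by rwa [Sym2.eq_swap], h2.symm⟩⟩

/-- For a simple path `P₀` in `G` and indices `i ≤ j < |P₀|`: in the graph
obtained by deleting the edges of `P₀` from `G`, vertices `P₀ₖ`
(`i ≤ k ≤ j`) of equal parity of index are in a common connected component,
while those of different parity are in different connected components. -/
def OddEvenSplit (G : SimpleGraph V) (P0 : List V) (i j : ℕ)
    (hj : j < P0.length) : Prop :=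
  (∀ (k l : ℕ) (hik : i ≤ k) (hkj : k ≤ j) (hil : i ≤ l) (hlj : l ≤ j),
      k % 2 = l % 2 →
      (G.deleteEdges (edgesOf P0)).Reachable
        (P0.get ⟨k, by omega⟩) (P0.get ⟨l, by omega⟩)) ∧
  (∀ (k l : ℕ) (hik : i ≤ k) (hkj : k ≤ j) (hil : i ≤ l) (hlj : l ≤ j),
      k % 2 ≠ l % 2 →
      ¬ (G.deleteEdges (edgesOf P0)).Reachable
        (P0.get ⟨k, by omega⟩) (P0.get ⟨l, by omega⟩))

end NSP

namespace List

variable {α : Type*} {l : List α}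

lemma Nodup.getElem_notMem_take (h : l.Nodup) {i : ℕ} (hi : i < l.length) : l[i] ∉ l.take i := by
  rw [mem_iff_getElem]
  rintro ⟨j, hj, he⟩
  simp only [length_take, getElem_take] at hj he
  have := h.getElem_inj_iff.mp he
  omega

lemma Nodup.getElem_notMem_drop (h : l.Nodup) {i : ℕ} (hi : i < l.length) :
    l[i] ∉ l.drop (i + 1) := by
  rw [mem_iff_getElem]
  rintro ⟨j, hj, he⟩
  simp only [length_drop, getElem_drop] at hj he
  have := h.getElem_inj_iff.mp he
  omega

end List

namespace SimpleGraph

variable {V : Type*} {G H : SimpleGraph V} {u v : V}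

lemma Connected.of_forall_adj_reachable (hG : G.Connected)
    (h : ∀ a b, G.Adj a b → H.Reachable a b) : H.Connected := by
  refine (connected_iff _).mpr ⟨fun a b => ?_, hG.nonempty⟩
  obtain ⟨W⟩ := hG.preconnected a b
  induction W with
  | nil => rfl
  | cons hadj _ ih => exact (h _ _ hadj).trans ih

namespace Walk

lemma succ_eq_or_eq_succ_of_adj_getVert {W : G.Walk u v} (hW : W.length = G.dist u v)
    {i j : ℕ} (hi : i ≤ W.length) (hj : j ≤ W.length)
    (hadj : G.Adj (W.getVert i) (W.getVert j)) : j = i + 1 ∨ i = j + 1 := by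
  have shortcut : ∀ {i j : ℕ}, i < j → j ≤ W.length →
      G.Adj (W.getVert i) (W.getVert j) → j = i + 1 := by
    intro i j hij hj hadj
    have := dist_le ((W.take i).append (cons hadj (W.drop j)))
    simp only [length_append, length_cons, take_length, drop_length] at this
    omega
  rcases lt_trichotomy i j with hij | rfl | hji
  · exact .inl (shortcut hij hj hadj)
  · exact absurd rfl hadj.ne
  · exact .inr (shortcut hji hi hadj.symm)

lemma mem_edges_of_adj {W : G.Walk u v} (hW : W.length = G.dist u v) {a b : V}
    (ha : a ∈ W.support) (hb : b ∈ W.support) (hab : G.Adj a b) : s(a, b) ∈ W.edges := by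
  obtain ⟨i, rfl, hi⟩ := mem_support_iff_exists_getVert.mp ha
  obtain ⟨j, rfl, hj⟩ := mem_support_iff_exists_getVert.mp hb
  rw [mk_mem_edges_iff_exists]
  rcases succ_eq_or_eq_succ_of_adj_getVert hW hi hj hab with rfl | rfl
  · exact ⟨i, by omega, rfl⟩
  · exact ⟨j, by omega, Sym2.eq_swap⟩

lemma notMem_support_of_adj_adj {W : G.Walk u v} (hW : W.length = G.dist u v) {a b x : V}
    (he : s(a, b) ∈ W.edges) (hax : G.Adj a x) (hxb : G.Adj x b) : x ∉ W.support := by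
  intro hx
  obtain ⟨m, rfl, hm⟩ := mem_support_iff_exists_getVert.mp hx
  obtain ⟨k, hk, hkab⟩ := (mk_mem_edges_iff_exists W).mp he
  have hm_near : ∀ {k}, k ≤ W.length → G.Adj (W.getVert k) (W.getVert m) →
      m = k + 1 ∨ k = m + 1 :=
    fun hk hadj => succ_eq_or_eq_succ_of_adj_getVert hW hk hm hadj
  rcases Sym2.eq_iff.mp hkab with ⟨rfl, rfl⟩ | ⟨rfl, rfl⟩
  · have := hm_near hk.le hax
    have := hm_near hk hxb.symm
    omega
  · have := hm_near hk.le hxb.symm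
    have := hm_near hk hax
    omega

lemma IsTrail.not_isBridge_of_mem_edges {W : G.Walk u v} (hW : W.IsTrail) {e : Sym2 V}
    (he : e ∈ W.edges) (hreach : (G.deleteEdges {e}).Reachable u v) : ¬G.IsBridge e := by
  obtain ⟨i, hi, rfl⟩ := List.getElem_of_mem he
  have hpre := hW.edges_nodup.getElem_notMem_take hi
  have hsuf := hW.edges_nodup.getElem_notMem_drop hi
  rw [← edges_take] at hpre
  rw [← edges_drop] at hsuf
  rw [getElem_edges] at hpre hsuf hreach ⊢
  rw [isBridge_iff, not_not]
  exact (reachable_deleteEdges_iff_exists_walk.mpr ⟨_, hpre⟩).symm.trans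
    (hreach.trans (reachable_deleteEdges_iff_exists_walk.mpr ⟨_, hsuf⟩).symm)

end Walk

end SimpleGraph

namespace NSP

variable {V : Type*}

section

variable {G : SimpleGraph V}

lemma Chordal.exists_adj_adj_of_not_isBridge (hG : Chordal G) {u v : V} (huv : G.Adj u v)
    (hnb : ¬G.IsBridge s(u, v)) : ∃ x, G.Adj u x ∧ G.Adj x v := by
  set G' := G.deleteEdges {s(u, v)}
  have hle : G' ≤ G := G.deleteEdges_le _
  obtain ⟨Q, hQpath, hQ⟩ := (not_not.mp hnb : G'.Reachable u v).exists_path_of_dist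
  have hQ0 : Q.length ≠ 0 := fun h => huv.ne (Walk.eq_of_length_eq_zero h)
  have hQ1 : Q.length ≠ 1 := fun h => by simpa [G'] using Walk.adj_of_length_eq_one h
  rcases (show Q.length = 2 ∨ 3 ≤ Q.length by omega) with hQ2 | hQ3
  · refine ⟨Q.getVert 1, hle (by simpa using Q.adj_getVert_succ (i := 0) (by omega)), hle ?_⟩
    have h12 := Q.adj_getVert_succ (i := 1) (by omega)
    rwa [show 1 + 1 = Q.length by omega, Walk.getVert_length] at h12
  exfalso
  set C := Walk.cons huv.symm (Q.mapLe hle)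
  have hvu : s(v, u) ∉ Q.edges := fun h => by
    simpa [G', Sym2.eq_swap] using Q.edges_subset_edgeSet h
  have hC : C.IsCycle :=
    (Walk.cons_isCycle_iff _ _).mpr ⟨hQpath.mapLe hle, by rwa [Walk.edges_mapLe_eq_edges]⟩
  obtain ⟨a, b, ha, hb, hab, habC⟩ := hG C hC (by simp only [C, Walk.length_cons, Walk.length_map]; omega)
  have hCsupp : C.support ⊆ Q.support := by
    simp [C, List.subset_def, Q.end_mem_support]
  have hCedges : C.edges = s(v, u) :: Q.edges := by simp [C]
  have hab' : G'.Adj a b := deleteEdges_adj.mpr ⟨hab, fun h => habC (by simp_all [Sym2.eq_swap])⟩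
  exact habC (hCedges ▸ List.mem_cons_of_mem _ (Q.mem_edges_of_adj hQ (hCsupp ha) (hCsupp hb) hab'))

theorem Chordal.connected_deleteEdges_of_length_eq_dist (hchordal : Chordal G)
    (hconn : G.Connected) {S T : V} (W : G.Walk S T) (hW : W.length = G.dist S T)
    (hbr : ∀ e : Sym2 V, G.IsBridge e → (G.deleteEdges {e}).Reachable S T) :
    (G.deleteEdges {e | e ∈ W.edges}).Connected := by
  refine hconn.of_forall_adj_reachable fun a b hab => ?_
  by_cases he : s(a, b) ∈ W.edges
  · have hnb := (W.isPath_of_length_eq_dist hW).isTrail.not_isBridge_of_mem_edges he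
    obtain ⟨x, hax, hxb⟩ := hchordal.exists_adj_adj_of_not_isBridge hab (fun h => hnb (hbr _ h) h)
    have hx := W.notMem_support_of_adj_adj hW he hax hxb
    have hax' : (G.deleteEdges {e | e ∈ W.edges}).Adj a x :=
      deleteEdges_adj.mpr ⟨hax, fun h => hx (W.snd_mem_support_of_mem_edges h)⟩
    have hxb' : (G.deleteEdges {e | e ∈ W.edges}).Adj x b :=
      deleteEdges_adj.mpr ⟨hxb, fun h => hx (W.fst_mem_support_of_mem_edges h)⟩
    exact hax'.reachable.trans hxb'.reachable
  · exact (deleteEdges_adj.mpr ⟨hab, he⟩).reachable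

lemma isPathSeq_support {u v : V} (W : G.Walk u v) : IsPathSeq G W.support :=
  ⟨W.support_ne_nil, W.isChain_adj_support⟩

lemma IsPathSeq.exists_walk_support_eq {p : List V} (hp : IsPathSeq G p) {S T : V}
    (hS : p.head? = some S) (hT : p.getLast? = some T) : ∃ W : G.Walk S T, W.support = p := by
  obtain ⟨hne, hchain⟩ := hp
  rw [List.head?_eq_some_head hne, Option.some.injEq] at hS
  rw [List.getLast?_eq_some_getLast hne, Option.some.injEq] at hT
  refine ⟨(Walk.ofSupport p hne hchain).copy hS hT, ?_⟩
  rw [Walk.support_copy]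
  exact Walk.support_ofSupport _ _

lemma edgesOf_support {u v : V} (W : G.Walk u v) : edgesOf W.support = {e | e ∈ W.edges} := by
  ext e
  simp only [edgesOf, Set.mem_ofPred_eq, List.get_eq_getElem, Walk.support_getElem_eq_getVert,
    Walk.length_support, List.mem_iff_getElem, Walk.getElem_edges, Walk.length_edges]
  constructor
  · rintro ⟨i, hi, rfl⟩
    exact ⟨i, by omega, rfl⟩
  · rintro ⟨i, hi, rfl⟩
    exact ⟨i, by omega, rfl⟩

end

theorem min_edge_path_nonSeparating_general
    {V : Type*} (G : SimpleGraph V)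
    (hconn : G.Connected) (hchordal : Chordal G) (S T : V)
    (hbr : ∀ e : Sym2 V, G.IsBridge e → (G.deleteEdges {e}).Reachable S T)
    (p : List V) (hp : IsPathSeq G p)
    (hS : p.head? = some S) (hT : p.getLast? = some T)
    (hmin : ∀ q : List V, IsPathSeq G q → q.head? = some S →
      q.getLast? = some T → p.length ≤ q.length) :
    ¬ SeparatingPath G p := by
  obtain ⟨W, rfl⟩ := hp.exists_walk_support_eq hS hT
  have hW : W.length = G.dist S T := by
    obtain ⟨Q, hQ⟩ := W.reachable.exists_walk_length_eq_dist
    have hle := hmin Q.support (isPathSeq_support Q)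
      (by rw [List.head?_eq_some_head Q.support_ne_nil, Walk.head_support])
      (by rw [List.getLast?_eq_some_getLast Q.support_ne_nil, Walk.getLast_support])
    have hdist := dist_le W
    simp only [Walk.length_support] at hle
    omega
  rw [SeparatingPath, Separating, edgesOf_support, not_not]
  exact hchordal.connected_deleteEdges_of_length_eq_dist hconn W hW hbr

/-- If `S` and `T` are not separated by a bridge, then any path from `S` to
`T` with the minimum possible number of edges is non-separating. -/
theorem min_edge_path_nonSeparating
    {V : Type*} [Fintype V] (G : SimpleGraph V)
    (hconn : G.Connected) (hchordal : Chordal G) (S T : V) (hST : S ≠ T)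
    (hbr : ∀ e : Sym2 V, G.IsBridge e → (G.deleteEdges {e}).Reachable S T)
    (p : List V) (hp : IsPathSeq G p)
    (hS : p.head? = some S) (hT : p.getLast? = some T)
    (hmin : ∀ q : List V, IsPathSeq G q → q.head? = some S →
      q.getLast? = some T → p.length ≤ q.length) :
    ¬ SeparatingPath G p :=
  min_edge_path_nonSeparating_general G hconn hchordal S T hbr p hp hS hT hmin

end NSP
end

section
/- Let r be a normal separator path and let p be any path from S to T in G. Then p visits at least one inner vertex of r. -/
open SimpleGraph

namespace NSP

variable {V : Type*}

/-!
Write `r = x₀ x₁ ⋯ y₀ y₁` and let `K` be `G` with the edges of `r` deleted. Since `x₁ ⋯ y₁` is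
not separating, `x₀x₁` is a bridge of `K + x₀x₁`, so `x₀` and `x₁` lie in different components
of `K`; symmetrically, every vertex reaches `y₀` or `y₁` in `K`. If an `S`–`T` path avoided the
inner vertices of `r`, then together with the two ends of a simple `S`–`T` path through `r` it
would give a walk `W` from `x₀` to `y₁` meeting `r` only in `x₀` and `y₁`, hence lying in `K`;
so `x₁` reaches `y₀` in `K`. A path from `y₁` to `x₀` inside `W` and a `K`-path from `x₁` to
`y₀` close up with `x₀x₁` and `y₀y₁` into a cycle of length at least four. Shortcutting chords
inside either path, chordality yields an edge between the two paths other than `x₀x₁` and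
`y₀y₁`. It is not an edge of `K`, as its ends lie in different components, and not an edge of
`r`, as the only edges of `r` at `x₀` and `y₁` are `x₀x₁` and `y₀y₁`.
-/

theorem edgesOf_cons_cons (a b : V) (l : List V) :
    edgesOf (a :: b :: l) = insert s(a, b) (edgesOf (b :: l)) := by
  ext e
  simp only [edgesOf, Set.mem_ofPred_eq, Set.mem_insert_iff]
  constructor
  · rintro ⟨_ | i, hi, rfl⟩
    · exact Or.inl rfl
    · exact Or.inr ⟨i, by simpa using hi, rfl⟩
  · rintro (rfl | ⟨i, hi, rfl⟩)
    · exact ⟨0, by simp, rfl⟩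
    · exact ⟨i + 1, by simpa using hi, rfl⟩

theorem edgesOf_reverse (l : List V) : edgesOf l.reverse = edgesOf l := by
  suffices h : ∀ l : List V, edgesOf l.reverse ⊆ edgesOf l by
    exact (h l).antisymm (by simpa using h l.reverse)
  rintro l _ ⟨i, hi, rfl⟩
  simp only [List.length_reverse] at hi
  refine ⟨l.length - 2 - i, by omega, ?_⟩
  simp only [List.get_eq_getElem, List.getElem_reverse]
  rw [Sym2.eq_swap]
  congr 2 <;> omega

theorem edgesOf_append_pair (l : List V) (a b : V) :
    edgesOf (l ++ [a, b]) = insert s(a, b) (edgesOf (l ++ [a])) := by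
  rw [← edgesOf_reverse, ← edgesOf_reverse (l ++ [a])]
  simp [edgesOf_cons_cons, Sym2.eq_swap]

theorem mem_of_mk_mem_edgesOf {l : List V} {a b : V} (h : s(a, b) ∈ edgesOf l) :
    a ∈ l ∧ b ∈ l := by
  obtain ⟨i, hi, he⟩ := h
  rcases Sym2.eq_iff.mp he with ⟨rfl, rfl⟩ | ⟨rfl, rfl⟩ <;> simp

theorem eq_of_mk_mem_edgesOf_cons_cons {a b z : V} {l : List V} (hl : (a :: b :: l).Nodup)
    (h : s(a, z) ∈ edgesOf (a :: b :: l)) : z = b := by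
  rw [edgesOf_cons_cons, Set.mem_insert_iff] at h
  rcases h with h | h
  · exact Sym2.congr_right.mp h
  · exact absurd (mem_of_mk_mem_edgesOf h).1 (List.nodup_cons.mp hl).1

theorem eq_of_mk_mem_edgesOf_append_pair {a b z : V} {l : List V} (hl : (l ++ [a, b]).Nodup)
    (h : s(b, z) ∈ edgesOf (l ++ [a, b])) : z = a := by
  have hrev : (l ++ [a, b]).reverse = b :: a :: l.reverse := by simp
  rw [← edgesOf_reverse, hrev] at h
  exact eq_of_mk_mem_edgesOf_cons_cons (hrev ▸ List.nodup_reverse.mpr hl) h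

theorem exists_eq_cons_cons_append_pair {l : List V} (hl : 3 < l.length) :
    ∃ x₀ x₁ m y₀ y₁, l = x₀ :: x₁ :: m ++ [y₀, y₁] := by
  obtain ⟨x₀, x₁, t, rfl⟩ : ∃ x₀ x₁ t, l = x₀ :: x₁ :: t := by
    match l, hl with | x₀ :: x₁ :: t, _ => exact ⟨x₀, x₁, t, rfl⟩
  have ht : 1 < t.reverse.length := by simp at hl ⊢; omega
  obtain ⟨y₁, y₀, m, hm⟩ : ∃ y₁ y₀ m, t.reverse = y₁ :: y₀ :: m := by
    match t.reverse, ht with | y₁ :: y₀ :: m, _ => exact ⟨y₁, y₀, m, rfl⟩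
  refine ⟨x₀, x₁, m.reverse, y₀, y₁, ?_⟩
  rw [← List.reverse_reverse t, hm]
  simp

theorem contigSub_cons (a : V) {l : List V} (hl : l ≠ []) : ContigSub l (a :: l) :=
  ⟨1, l.length, List.length_pos_iff.mpr hl, by simp, by simp [subseq]⟩

theorem contigSub_append_singleton {l : List V} (b : V) (hl : l ≠ []) : ContigSub l (l ++ [b]) := by
  have := List.length_pos_iff.mpr hl
  refine ⟨0, l.length - 1, by omega, by simp, ?_⟩
  simp [subseq, Nat.sub_add_cancel this]

theorem ContigSub.isInfix {q l : List V} (h : ContigSub q l) : q <:+: l := by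
  obtain ⟨i, j, -, -, rfl⟩ := h
  exact (List.drop_suffix _ _).isInfix.trans (List.take_prefix _ _).isInfix

end NSP

namespace SimpleGraph

variable {V : Type*} {G : SimpleGraph V}

theorem deleteEdges_insert (e : Sym2 V) (D : Set (Sym2 V)) :
    G.deleteEdges (insert e D) = (G.deleteEdges D).deleteEdges {e} := by
  rw [deleteEdges_deleteEdges, Set.insert_eq, Set.union_comm]

theorem Walk.reachable_deleteEdges_or {u c a b : V} (W : G.Walk u c)
    (h : (G.deleteEdges {s(a, b)}).Reachable c a ∨ (G.deleteEdges {s(a, b)}).Reachable c b) :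
    (G.deleteEdges {s(a, b)}).Reachable u a ∨ (G.deleteEdges {s(a, b)}).Reachable u b := by
  induction W with
  | nil => exact h
  | @cons u x _ hadj _ ih =>
    by_cases he : s(u, x) = s(a, b)
    · rcases Sym2.eq_iff.mp he with ⟨rfl, -⟩ | ⟨rfl, -⟩
      · exact Or.inl .rfl
      · exact Or.inr .rfl
    · have hK : (G.deleteEdges {s(a, b)}).Adj u x := deleteEdges_adj.mpr ⟨hadj, he⟩
      exact (ih h).imp hK.reachable.trans hK.reachable.trans

namespace Walk

theorem reachable_of_mem_support {u v x : V} (W : G.Walk u v) (hx : x ∈ W.support) :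
    G.Reachable u x := by
  classical
  exact ⟨W.takeUntil x hx⟩

theorem exists_shorter_of_isChord {a b u w : V} (P : G.Walk a b) (h : P.IsChord s(u, w)) :
    ∃ Q : G.Walk a b, Q.support ⊆ P.support ∧ Q.length < P.length := by
  obtain ⟨huw, he, hu, hw⟩ := isChord_sym2Mk.mp h
  obtain ⟨i, rfl, hi⟩ := mem_support_iff_exists_getVert.mp hu
  obtain ⟨j, rfl, hj⟩ := mem_support_iff_exists_getVert.mp hw
  clear h hu hw
  wlog hij : i < j generalizing i j
  · have hne : i ≠ j := fun h => huw.ne (h ▸ rfl)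
    exact this j hj i hi huw.symm (Sym2.eq_swap ▸ he) (by omega)
  have hsucc : i + 1 ≠ j := by
    rintro rfl
    exact he ((P.mk_mem_edges_iff_exists).mpr ⟨i, by omega, rfl⟩)
  refine ⟨(P.take i).append (cons huw (P.drop j)), fun x hx => ?_, ?_⟩
  · rw [mem_support_append_iff, support_cons, List.mem_cons, support_take,
      drop_support_eq_support_drop_min] at hx
    rcases hx with hx | rfl | hx
    · exact List.mem_of_mem_take hx
    · exact P.getVert_mem_support i
    · exact List.mem_of_mem_drop hx
  · simp only [length_append, length_cons, take_length, drop_length]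
    omega

theorem IsPath.isCycle_cons_append_cons {x₀ x₁ y₀ y₁ : V} (hx : G.Adj x₀ x₁) (hy : G.Adj y₀ y₁)
    {A : G.Walk y₁ x₀} {B : G.Walk x₁ y₀} (hA : A.IsPath) (hB : B.IsPath)
    (hAB : A.support.Disjoint B.support) (hyx : y₁ ≠ x₀) :
    (cons hx (B.append (cons hy A))).IsCycle := by
  have hP : (B.append (cons hy A)).IsPath := by
    rw [isPath_def, support_append, support_cons, List.tail_cons]
    exact hB.support_nodup.append hA.support_nodup hAB.symm
  refine (cons_isCycle_iff _ hx).mpr ⟨hP, fun h => ?_⟩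
  have hlen := hP.length_eq_one_of_mem_edges (Sym2.eq_swap ▸ h)
  have hA0 : A.length ≠ 0 := fun h0 => hyx (eq_of_length_eq_zero h0)
  simp only [length_append, length_cons] at hlen
  omega

end Walk

end SimpleGraph

namespace NSP

open SimpleGraph.Walk

variable {V : Type*}

theorem SeparatorPath.connected_deleteEdges {G : SimpleGraph V} {r q : List V}
    (hr : SeparatorPath G r) (hq : ContigSub q r) (hne : q ≠ r) :
    (G.deleteEdges (edgesOf q)).Connected :=
  not_not.mp (hr.2.2 q hq hne)

theorem SeparatorPath.not_reachable_deleteEdges_cons_cons {G : SimpleGraph V} {a b : V}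
    {l : List V} (hr : SeparatorPath G (a :: b :: l)) :
    ¬ (G.deleteEdges (edgesOf (a :: b :: l))).Reachable a b := by
  have hH := hr.connected_deleteEdges (contigSub_cons a (List.cons_ne_nil b l))
    (List.cons_ne_self a _).symm
  intro hab
  apply hr.2.1
  rw [edgesOf_cons_cons, deleteEdges_insert] at hab ⊢
  exact hH.connected_delete_edge_of_not_isBridge (by rwa [isBridge_iff, not_not])

theorem SeparatorPath.reachable_deleteEdges_or_append_pair {G : SimpleGraph V} {a b : V}
    {l : List V} (hr : SeparatorPath G (l ++ [a, b])) (v : V) :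
    (G.deleteEdges (edgesOf (l ++ [a, b]))).Reachable v a ∨
      (G.deleteEdges (edgesOf (l ++ [a, b]))).Reachable v b := by
  have hH := hr.connected_deleteEdges (q := l ++ [a])
    (by simpa using contigSub_append_singleton b (l := l ++ [a]) (by simp)) (by simp)
  rw [edgesOf_append_pair, deleteEdges_insert]
  obtain ⟨W⟩ := hH.preconnected v a
  exact W.reachable_deleteEdges_or (Or.inl .rfl)

theorem Chordal.exists_adj_of_disjoint_paths {G : SimpleGraph V} (hG : Chordal G)
    {x₀ x₁ y₀ y₁ : V} (hx : G.Adj x₀ x₁) (hy : G.Adj y₀ y₁) (hyx : y₁ ≠ x₀) (hxy : x₁ ≠ y₀)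
    (A : G.Walk y₁ x₀) (B : G.Walk x₁ y₀) (hA : A.IsPath) (hB : B.IsPath)
    (hAB : A.support.Disjoint B.support) :
    ∃ a ∈ A.support, ∃ b ∈ B.support, G.Adj a b ∧ s(a, b) ≠ s(x₀, x₁) ∧ s(a, b) ≠ s(y₁, y₀) := by
  classical
  obtain ⟨n, hn⟩ : ∃ n, A.length + B.length = n := ⟨_, rfl⟩
  induction n using Nat.strong_induction_on generalizing A B with
  | _ n ih =>
  have hA0 : A.length ≠ 0 := fun h0 => hyx (eq_of_length_eq_zero h0)
  have hB0 : B.length ≠ 0 := fun h0 => hxy (eq_of_length_eq_zero h0)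
  set C := cons hx (B.append (cons hy A))
  have hC : C.IsCycle := hA.isCycle_cons_append_cons hx hy hB hAB hyx
  obtain ⟨u, w, hu, hw, huw, hchord⟩ := hG C hC (by simp [C]; omega)
  have hsupp : ∀ v ∈ C.support, v ∈ A.support ∨ v ∈ B.support := by
    intro v hv
    simp only [C, support_cons, support_append, List.tail_cons, List.mem_cons,
      List.mem_append] at hv
    rcases hv with rfl | hv | hv
    · exact Or.inl A.end_mem_support
    · exact Or.inr hv
    · exact Or.inl hv
  have hAC : ∀ e ∈ A.edges, e ∈ C.edges := by intro e he; simp [C, he]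
  have hBC : ∀ e ∈ B.edges, e ∈ C.edges := by intro e he; simp [C, he]
  have hxC : s(x₀, x₁) ∈ C.edges := by simp [C]
  have hyC : s(y₁, y₀) ∈ C.edges := by simp [C, Sym2.eq_swap]
  rcases hsupp u hu with huA | huB <;> rcases hsupp w hw with hwA | hwB
  · obtain ⟨Q, hQ, hQA⟩ := A.exists_shorter_of_isChord
      (isChord_sym2Mk.mpr ⟨huw, fun h => hchord (hAC _ h), huA, hwA⟩)
    obtain ⟨a, ha, b, hb, hab⟩ := ih _ (by have := Q.length_bypass_le_length; omega) Q.bypass B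
      Q.bypass_isPath hB (fun v hv => hAB (hQ (Q.support_bypass_subset_support hv))) rfl
    exact ⟨a, hQ (Q.support_bypass_subset_support ha), b, hb, hab⟩
  · exact ⟨u, huA, w, hwB, huw, fun h => hchord (h ▸ hxC), fun h => hchord (h ▸ hyC)⟩
  · exact ⟨w, hwA, u, huB, huw.symm, fun h => hchord (Sym2.eq_swap.trans h ▸ hxC),
      fun h => hchord (Sym2.eq_swap.trans h ▸ hyC)⟩
  · obtain ⟨Q, hQ, hQB⟩ := B.exists_shorter_of_isChord
      (isChord_sym2Mk.mpr ⟨huw, fun h => hchord (hBC _ h), huB, hwB⟩)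
    obtain ⟨a, ha, b, hb, hab⟩ := ih _ (by have := Q.length_bypass_le_length; omega) A Q.bypass
      hA Q.bypass_isPath (fun v hv hv' => hAB hv (hQ (Q.support_bypass_subset_support hv'))) rfl
    exact ⟨a, ha, b, hQ (Q.support_bypass_subset_support hb), hab⟩

theorem Chordal.reachable_deleteEdges_of_walk {G : SimpleGraph V} (hG : Chordal G)
    {D : Set (Sym2 V)} {x₀ x₁ y₀ y₁ : V} (hx : G.Adj x₀ x₁) (hy : G.Adj y₀ y₁)
    (hyx : y₁ ≠ x₀) (hxy : x₁ ≠ y₀) (W : G.Walk x₀ y₁) (hx₁ : x₁ ∉ W.support)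
    (hy₀ : y₀ ∉ W.support)
    (hWD : ∀ v ∈ W.support, ∀ z, s(v, z) ∈ D → s(v, z) = s(x₀, x₁) ∨ s(v, z) = s(y₁, y₀))
    (hsplit : ∀ v, (G.deleteEdges D).Reachable v y₀ ∨ (G.deleteEdges D).Reachable v y₁) :
    (G.deleteEdges D).Reachable x₀ x₁ := by
  classical
  by_contra hsep
  have hWK : ∀ e ∈ W.edges, e ∉ D := by
    intro e he heD
    induction e using Sym2.ind with | _ u v =>
    have hu := W.fst_mem_support_of_mem_edges he
    have hv := W.snd_mem_support_of_mem_edges he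
    rcases hWD u hu v heD with h | h <;> rcases Sym2.eq_iff.mp h with ⟨rfl, rfl⟩ | ⟨rfl, rfl⟩
    all_goals contradiction
  set WK := W.toDeleteEdges D hWK
  have hreachW : ∀ v ∈ W.support, (G.deleteEdges D).Reachable x₀ v := fun v hv =>
    WK.reachable_of_mem_support (by simpa [WK] using hv)
  obtain ⟨BK, hBK⟩ := ((hsplit x₁).resolve_right
    fun h => hsep (WK.reachable.trans h.symm)).exists_isPath
  obtain ⟨a, ha, b, hb, hab, hne₁, hne₂⟩ := hG.exists_adj_of_disjoint_paths hx hy hyx hxy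
    W.bypass.reverse (BK.mapLe (G.deleteEdges_le D)) W.bypass_isPath.reverse (hBK.mapLe _)
    fun v hvA hvB => hsep ((hreachW v (W.support_bypass_subset_support (by simpa using hvA))).trans
      (BK.reachable_of_mem_support (by simpa using hvB)).symm)
  have haW : a ∈ W.support := W.support_bypass_subset_support (by simpa using ha)
  by_cases habD : s(a, b) ∈ D
  · exact (hWD a haW b habD).elim hne₁ hne₂
  · exact hsep ((hreachW a haW).trans ((deleteEdges_adj.mpr ⟨hab, habD⟩).reachable.trans
      (BK.reachable_of_mem_support (by simpa using hb)).symm))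

theorem IsPathSeq.exists_walk {G : SimpleGraph V} {p : List V} {a b : V} (hp : IsPathSeq G p)
    (ha : p.head? = some a) (hb : p.getLast? = some b) : ∃ W : G.Walk a b, W.support = p := by
  obtain ⟨hne, hch : p.IsChain G.Adj⟩ := hp
  have ha' : p.head hne = a := by simpa [List.head?_eq_some_head hne] using ha
  have hb' : p.getLast hne = b := by simpa [List.getLast?_eq_some_getLast hne] using hb
  exact ⟨(SimpleGraph.Walk.ofSupport p hne hch).copy ha' hb', by
    rw [support_copy, support_ofSupport]⟩

theorem eq_or_eq_or_innerMem {r : List V} {a b v : V} (ha : r.head? = some a)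
    (hb : r.getLast? = some b) (hv : v ∈ r) : v = a ∨ v = b ∨ InnerMem r v := by
  obtain ⟨i, hi, rfl⟩ := List.getElem_of_mem hv
  rw [List.head?_eq_getElem?] at ha
  rw [List.getLast?_eq_getElem?] at hb
  by_cases h0 : i = 0
  · subst h0
    simp_all
  by_cases h1 : i = r.length - 1
  · subst h1
    simp_all
  · exact Or.inr (Or.inr ⟨i, hi, by omega, by omega, rfl⟩)

theorem Traversable.exists_walk_of_avoid_inner {G : SimpleGraph V} {S T a b : V}
    {r p : List V} (ht : Traversable G S T r) (ha : r.head? = some a) (hb : r.getLast? = some b)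
    (hp : IsPathSeq G p) (hS : p.head? = some S) (hT : p.getLast? = some T)
    (havoid : ∀ v, InnerMem r v → v ∉ p) :
    ∃ W : G.Walk a b, ∀ v ∈ W.support, v ∈ r → v = a ∨ v = b := by
  obtain ⟨q, ⟨⟨-, hq⟩, hnd⟩, hqS, hqT, hrq⟩ := ht
  obtain ⟨l₁, l₂, rfl⟩ := hrq.isInfix
  obtain ⟨r₁, rfl⟩ := List.head?_eq_some_iff.mp ha
  obtain ⟨r₂, hr₂⟩ := List.getLast?_eq_some_iff.mp hb
  have hq₁ : l₁ ++ a :: r₁ ++ l₂ = (l₁ ++ [a]) ++ (r₁ ++ l₂) := by simp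
  have hq₂ : l₁ ++ a :: r₁ ++ l₂ = (l₁ ++ r₂) ++ (b :: l₂) := by simp [hr₂]
  obtain ⟨W₁, hW₁⟩ := IsPathSeq.exists_walk (G := G) (a := S) (b := a)
    ⟨by simp, hq.prefix ⟨_, hq₁.symm⟩⟩ (by simpa [hq₁] using hqS) (by simp)
  obtain ⟨W₂, hW₂⟩ := IsPathSeq.exists_walk (G := G) (a := b) (b := T)
    ⟨by simp, hq.suffix ⟨_, hq₂.symm⟩⟩ rfl (by simpa [hq₂] using hqT)
  obtain ⟨Wp, hWp⟩ := hp.exists_walk hS hT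
  refine ⟨W₁.reverse.append (Wp.append W₂.reverse), fun v hv hvr => ?_⟩
  have hl₁ : v ∉ l₁ := fun h =>
    List.disjoint_of_nodup_append (List.Nodup.of_append_left hnd) h hvr
  have hl₂ : v ∉ l₂ := fun h =>
    List.disjoint_of_nodup_append (List.Nodup.of_append_right (l₁ := l₁) (by simpa using hnd)) hvr h
  simp only [mem_support_append_iff, support_reverse, List.mem_reverse, hW₁, hW₂, hWp,
    List.mem_append, List.mem_cons, List.not_mem_nil, or_false] at hv
  rcases hv with (h | rfl) | hvp | rfl | h
  · exact absurd h hl₁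
  · exact Or.inl rfl
  · rcases eq_or_eq_or_innerMem ha hb hvr with h | h | h
    · exact Or.inl h
    · exact Or.inr h
    · exact absurd hvp (havoid v h)
  · exact Or.inr rfl
  · exact absurd h hl₂

theorem normalSep_path_visits_inner_general
    {V : Type*} (G : SimpleGraph V)
    (hchordal : Chordal G)
    (S T : V)
    (w : Sym2 V → ℝ)
    (r : List V) (hr : NormalSep G w S T r)
    (p : List V) (hp : IsPathSeq G p)
    (hS : p.head? = some S) (hT : p.getLast? = some T) :
    ∃ v : V, InnerMem r v ∧ v ∈ p := by
  obtain ⟨hsep, htrav, -, hlen⟩ := hr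
  obtain ⟨x₀, x₁, m, y₀, y₁, rfl⟩ := exists_eq_cons_cons_append_pair hlen
  obtain ⟨⟨-, hchain : List.IsChain G.Adj _⟩, hnd⟩ := hsep.1
  obtain ⟨hx₁x₀, hx₁y₁, hx₁y₀, hy₀x₀, hy₀y₁, hy₁x₀⟩ :
      x₁ ≠ x₀ ∧ x₁ ≠ y₁ ∧ x₁ ≠ y₀ ∧ y₀ ≠ x₀ ∧ y₀ ≠ y₁ ∧ y₁ ≠ x₀ := by
    simp only [List.cons_append, List.nodup_cons, List.mem_cons, List.mem_append] at hnd
    grind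
  by_contra! havoid
  obtain ⟨W, hW⟩ := htrav.exists_walk_of_avoid_inner (b := y₁) rfl
    (List.getLast?_eq_some_iff.mpr ⟨x₀ :: x₁ :: m ++ [y₀], by simp⟩) hp hS hT havoid
  have hWD : ∀ v ∈ W.support, ∀ z, s(v, z) ∈ edgesOf (x₀ :: x₁ :: m ++ [y₀, y₁]) →
      s(v, z) = s(x₀, x₁) ∨ s(v, z) = s(y₁, y₀) := by
    intro v hv z hz
    rcases hW v hv (mem_of_mk_mem_edgesOf hz).1 with rfl | rfl
    · exact Or.inl (by rw [eq_of_mk_mem_edgesOf_cons_cons hnd hz])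
    · exact Or.inr (by rw [eq_of_mk_mem_edgesOf_append_pair hnd hz])
  exact hsep.not_reachable_deleteEdges_cons_cons <|
    hchordal.reachable_deleteEdges_of_walk hchain.rel (hchain.suffix ⟨_, rfl⟩).rel hy₁x₀ hx₁y₀ W
      (fun h => (hW x₁ h (by simp)).elim hx₁x₀ hx₁y₁)
      (fun h => (hW y₀ h (by simp)).elim hy₀x₀ hy₀y₁) hWD
      hsep.reachable_deleteEdges_or_append_pair

/-- If `r` is a normal separator path, every path from `S` to `T` visits at
least one inner vertex of `r`. -/
theorem normalSep_path_visits_inner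
    {V : Type*} [Fintype V] (G : SimpleGraph V)
    (hconn : G.Connected) (hchordal : Chordal G)
    (S T : V) (hST : S ≠ T) (hnb : ∀ e : Sym2 V, ¬ G.IsBridge e)
    (w : Sym2 V → ℝ) (hw : EdgePos G w)
    (r : List V) (hr : NormalSep G w S T r)
    (p : List V) (hp : IsPathSeq G p)
    (hS : p.head? = some S) (hT : p.getLast? = some T) :
    ∃ v : V, InnerMem r v ∧ v ∈ p :=
  normalSep_path_visits_inner_general G hchordal S T w r hr p hp hS hT

end NSP
end
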